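/- arXiv:1809.06921 — 2 statements merged into one kernel-verified Lean document; each statement's English description precedes it below -/
import Mathlib

section
/- Let f be an odd q-periodic arithmetical function (f(q-n) = -f(n)). Then L(s,f) satisfies the functional equation L(1-s, f) = 2i Γ(s) (q/(2π))^s sin(πs/2) L(s, f̂), where f̂ is the Fourier transform of f. -/
/-!
A `q`-periodic function on `ℤ` is a function `Φ` on `ZMod q`, and the sums over `1 ≤ a ≤ q` defining
`L(s, f)` and `f̂` are `ZMod.LFunction Φ` and `q⁻¹ • 𝓕 Φ`. The general functional equation
of `ZMod.LFunction` expresses `L(1 - s, Φ)` through `e^{πis/2} L(s, 𝓕 Φ) + e^{-πis/2} L(s, 𝓕 (Φ ∘ neg))`; for odd `Φ`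
the second transform is `-𝓕 Φ`, and the two exponentials combine to `2i sin(πs/2)`.
-/

open Finset Complex ZMod HurwitzZeta

namespace ZMod

variable {q : ℕ} [NeZero q]

theorem exists_comp_intCast_of_periodic {M : Type*} {g : ℤ → M}
    (hg : Function.Periodic g q) : ∃ Φ : ZMod q → M, g = Φ ∘ Int.cast := by
  refine ⟨fun j ↦ g j.val, funext fun n ↦ ?_⟩
  rw [Function.comp_apply, val_intCast, Int.emod_def, mul_comm]
  exact (hg.sub_int_mul_eq _).symm

theorem sum_Icc_natCast {M : Type*} [AddCommMonoid M] (Φ : ZMod q → M) :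
    ∑ a ∈ Icc 1 q, Φ a = ∑ j : ZMod q, Φ j := by
  refine sum_nbij' (fun a ↦ (a : ZMod q)) (fun j ↦ if j = 0 then q else j.val)
    (fun _ _ ↦ mem_univ _) (fun j _ ↦ ?_) (fun a ha ↦ ?_) (fun j _ ↦ ?_) (fun _ _ ↦ rfl)
  · split_ifs with hj
    · simpa using NeZero.one_le
    · exact mem_Icc.mpr ⟨Nat.one_le_iff_ne_zero.mpr ((val_ne_zero j).mpr hj), (val_lt j).le⟩
  · obtain ⟨ha1, haq⟩ := mem_Icc.mp ha
    rcases haq.eq_or_lt with rfl | hlt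
    · simp
    · have ha0 : (a : ZMod q) ≠ 0 := by
        rw [Ne, natCast_eq_zero_iff]
        exact Nat.not_dvd_of_pos_of_lt ha1 hlt
      simp [ha0, val_natCast_of_lt hlt]
  · split_ifs with hj
    · simp [hj]
    · simp

theorem LFunction_eq_sum_Icc (Φ : ZMod q → ℂ) (s : ℂ) :
    LFunction Φ s = (q : ℂ) ^ (-s) *
      ∑ a ∈ Icc 1 q, Φ a * hurwitzZeta (↑((a : ℝ) / q) : UnitAddCircle) s := by
  simp only [← toAddCircle_natCast, sum_Icc_natCast (fun j ↦ Φ j * hurwitzZeta (toAddCircle j) s),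
    LFunction]

theorem LFunction_const_mul (c : ℂ) (Φ : ZMod q → ℂ) (s : ℂ) :
    LFunction (fun j ↦ c * Φ j) s = c * LFunction Φ s := by
  simp only [LFunction, mul_sum, mul_assoc, mul_left_comm c]

theorem dft_intCast_eq_sum_Icc (Φ : ZMod q → ℂ) (b : ℤ) :
    𝓕 Φ b = ∑ a ∈ Icc 1 q, Φ a * cexp (-2 * Real.pi * I * a * b / q) := by
  rw [dft_apply, ← sum_Icc_natCast]
  refine sum_congr rfl fun a _ ↦ ?_
  have hcast : -((a : ZMod q) * b) = ((-(a * b) : ℤ) : ZMod q) := by push_cast; ring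
  rw [hcast, stdAddChar_coe, smul_eq_mul, mul_comm]
  push_cast
  ring_nf

theorem natCast_cpow_sub_one_mul_two_pi_cpow_neg (s : ℂ) :
    (q : ℂ) ^ (s - 1) * (2 * Real.pi : ℂ) ^ (-s) = ((q : ℂ) / (2 * Real.pi)) ^ s * (q : ℂ)⁻¹ := by
  have hq : (q : ℂ) ≠ 0 := NeZero.ne _
  have h2π : (2 * Real.pi : ℂ) = ((2 * Real.pi : ℝ) : ℂ) := by push_cast; ring
  rw [cpow_sub _ _ hq, cpow_one, cpow_neg, h2π, ← ofReal_natCast,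
    div_cpow_ofReal_nonneg (Nat.cast_nonneg q) (by positivity)]
  ring

theorem exp_sub_exp_neg_pi_mul_I (s : ℂ) :
    cexp (Real.pi * I * s / 2) - cexp (-Real.pi * I * s / 2) =
      2 * I * Complex.sin (Real.pi * s / 2) := by
  have hx : (Real.pi * I * s / 2 : ℂ) = Real.pi * s / 2 * I := by ring
  have hy : (-Real.pi * I * s / 2 : ℂ) = -(Real.pi * s / 2) * I := by ring
  rw [hx, hy]
  linear_combination (-I) * two_sin (Real.pi * s / 2) +
    (cexp (Real.pi * s / 2 * I) - cexp (-(Real.pi * s / 2) * I)) * I_sq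

theorem LFunction_one_sub_of_odd {Φ : ZMod q → ℂ} (hΦ : Φ.Odd) {s : ℂ}
    (hs : ∀ n : ℕ, s ≠ -n) :
    LFunction Φ (1 - s) = 2 * I * Gamma s * ((q : ℂ) / (2 * Real.pi)) ^ s *
      Complex.sin (Real.pi * s / 2) * ((q : ℂ)⁻¹ * LFunction (𝓕 Φ) s) := by
  have hneg : 𝓕 (fun x ↦ Φ (-x)) = fun k ↦ -1 * 𝓕 Φ k := by
    rw [dft_comp_neg]
    exact funext fun k ↦ (dft_odd_iff.mpr hΦ k).trans (neg_one_mul _).symm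
  rw [LFunction_one_sub Φ hs (.inl hΦ.map_zero), hneg, LFunction_const_mul, mul_comm _ (Gamma s),
    mul_assoc (Gamma s), natCast_cpow_sub_one_mul_two_pi_cpow_neg]
  linear_combination Gamma s * ((q : ℂ) / (2 * Real.pi)) ^ s * (q : ℂ)⁻¹ * LFunction (𝓕 Φ) s *
    exp_sub_exp_neg_pi_mul_I s

end ZMod

theorem functional_equation_odd_general (q : ℕ) (hq : 0 < q) (f : ℤ → ℂ)
    (hper : ∀ n : ℤ, f (n + q) = f n)
    (hodd : ∀ n : ℤ, f (q - n) = -f n)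
    (fhat : ℤ → ℂ)
    (hfhat : ∀ b : ℤ, fhat b = (1 / q) * ∑ a ∈ Finset.Icc 1 q,
        f a * Complex.exp (-2 * Real.pi * Complex.I * a * b / q))
    (L : (ℤ → ℂ) → ℂ → ℂ)
    (hL : ∀ (g : ℤ → ℂ) (s : ℂ), L g s = (q : ℂ) ^ (-s) * ∑ a ∈ Finset.Icc 1 q,
        g a * hurwitzZeta (↑((a : ℝ) / q) : UnitAddCircle) s)
    (s : ℂ) (hs : ∀ n : ℕ, s ≠ -n) :
    L f (1 - s) = 2 * Complex.I * Complex.Gamma s * ((q : ℂ) / (2 * Real.pi)) ^ s *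
      Complex.sin (Real.pi * s / 2) * L fhat s := by
  have : NeZero q := ⟨hq.ne'⟩
  obtain ⟨Φ, rfl⟩ := exists_comp_intCast_of_periodic hper
  have hΦ : Φ.Odd := fun x ↦ by
    obtain ⟨n, rfl⟩ := intCast_surjective x
    simpa using hodd n
  have hLf : L (Φ ∘ Int.cast) (1 - s) = LFunction Φ (1 - s) := by
    simp [hL, LFunction_eq_sum_Icc]
  have hLfhat : L fhat s = (q : ℂ)⁻¹ * LFunction (𝓕 Φ) s := by
    have hfhat' : ∀ b : ℤ, fhat b = (q : ℂ)⁻¹ * 𝓕 Φ b := fun b ↦ by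
      simp [hfhat, dft_intCast_eq_sum_Icc]
    rw [← LFunction_const_mul, LFunction_eq_sum_Icc, hL]
    simp [hfhat']
  rw [hLf, hLfhat, LFunction_one_sub_of_odd hΦ hs]

/-- Functional equation for the `L`-series of an odd `q`-periodic function:
`L(1-s, f) = 2i Γ(s) (q/2π)^s sin(πs/2) L(s, f̂)`. -/
theorem functional_equation_odd (q : ℕ) (hq : 0 < q) (f : ℤ → ℂ)
    (hper : ∀ n : ℤ, f (n + q) = f n)
    (hodd : ∀ n : ℤ, f (q - n) = -f n)
    (fhat : ℤ → ℂ)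
    (hfhat : ∀ b : ℤ, fhat b = (1 / q) * ∑ a ∈ Finset.Icc 1 q,
        f a * Complex.exp (-2 * Real.pi * Complex.I * a * b / q))
    (L : (ℤ → ℂ) → ℂ → ℂ)
    (hL : ∀ (g : ℤ → ℂ) (s : ℂ), L g s = (q : ℂ) ^ (-s) * ∑ a ∈ Finset.Icc 1 q,
        g a * hurwitzZeta (↑((a : ℝ) / q) : UnitAddCircle) s)
    (s : ℂ) (hs : ∀ n : ℕ, s ≠ -n) (hs1 : s ≠ 1) :
    L f (1 - s) = 2 * Complex.I * Complex.Gamma s * ((q : ℂ) / (2 * Real.pi)) ^ s *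
      Complex.sin (Real.pi * s / 2) * L fhat s :=
  functional_equation_odd_general q hq f hper hodd fhat hfhat L hL s hs
end

section
/- Let f be a q-periodic arithmetical function with ∑_{a=1}^q f(a) = 0. Then for each k ≥ 0, the k-th derivative of L(s,f) at s = 1 satisfies L^{(k)}(1,f) = (-1)^k ∑_{a=1}^q f(a) γ_k(a,q), where γ_k(a,q) are the generalized Stieltjes constants. -/
/-!
On `re s > 1` we have `L⁽ᵏ⁾(s) = (-1)ᵏ ∑ f(n) logᵏ n / nˢ`. Splitting the partial sums of
`∑ f(n) logᵏ n / n` into residue classes gives `∑ₐ f(a) (∑_{n ≤ x, n ≡ a} logᵏ n / n)`; the main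
term `logᵏ⁺¹ x / (q (k + 1))` is the same for every class, so it cancels against `∑ₐ f(a) = 0`
and the series converges to `∑ₐ f(a) γₖ(a, q)`. Abel's theorem for Dirichlet series (summation by
parts against the decreasing weights `n^(-ε)`) then gives `L⁽ᵏ⁾(1 + ε) → (-1)ᵏ ∑ₐ f(a) γₖ(a, q)`
as `ε → 0⁺`, and continuity of `L⁽ᵏ⁾` identifies this limit with `L⁽ᵏ⁾(1)`.
-/

open Finset Filter Topology Function

section Abel

variable {E : Type*} [NormedAddCommGroup E] [NormedSpace ℝ E]

theorem tendsto_tsum_smul_of_tendsto_zero {ι : Type*} {l : Filter ι} {b : ℕ → E}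
    (hb : Tendsto b atTop (𝓝 0)) {D : ι → ℕ → ℝ} (K : ℝ)
    (hD_nonneg : ∀ᶠ i in l, ∀ n, 0 ≤ D i n) (hD_summable : ∀ᶠ i in l, Summable (D i))
    (hD_le : ∀ᶠ i in l, ∑' n, D i n ≤ K) (hD : ∀ n, Tendsto (fun i ↦ D i n) l (𝓝 0)) :
    Tendsto (fun i ↦ ∑' n, D i n • b n) l (𝓝 0) := by
  obtain ⟨M, hM⟩ := hb.norm.bddAbove_range
  refine Metric.tendsto_nhds.2 fun δ hδ ↦ ?_
  obtain ⟨η, hη, hKη⟩ := exists_pos_mul_lt (half_pos hδ) K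
  obtain ⟨N, hN⟩ := eventually_atTop.1
    ((tendsto_zero_iff_norm_tendsto_zero.1 hb).eventually (ge_mem_nhds hη))
  have hhead : Tendsto (fun i ↦ ∑ n ∈ range N, D i n * ‖b n‖) l (𝓝 0) := by
    simpa using tendsto_finsetSum _ fun n _ ↦ (hD n).mul_const ‖b n‖
  filter_upwards [hhead.eventually (gt_mem_nhds (half_pos hδ)), hD_nonneg, hD_summable, hD_le]
    with i hhead_lt hnn hsumm hle
  have hnorm : ∀ n, ‖D i n • b n‖ = D i n * ‖b n‖ := fun n ↦ by
    rw [norm_smul, Real.norm_of_nonneg (hnn n)]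
  have hsumm' : Summable fun n ↦ D i n * ‖b n‖ :=
    (hsumm.mul_right M).of_nonneg_of_le (fun n ↦ mul_nonneg (hnn n) (norm_nonneg _))
      fun n ↦ mul_le_mul_of_nonneg_left (hM ⟨n, rfl⟩) (hnn n)
  have htail : ∑' n, D i (n + N) * ‖b (n + N)‖ ≤ K * η :=
    calc ∑' n, D i (n + N) * ‖b (n + N)‖ ≤ ∑' n, D i (n + N) * η :=
          ((summable_nat_add_iff N).2 hsumm').tsum_le_tsum
            (fun n ↦ mul_le_mul_of_nonneg_left (hN _ (Nat.le_add_left N n)) (hnn _))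
            (((summable_nat_add_iff N).2 hsumm).mul_right η)
      _ = (∑' n, D i (n + N)) * η := tsum_mul_right
      _ ≤ K * η := by
          gcongr
          exact (tsum_comp_le_tsum_of_inj hsumm hnn (add_left_injective N)).trans hle
  rw [dist_zero_right]
  calc ‖∑' n, D i n • b n‖ ≤ ∑' n, D i n * ‖b n‖ := by
        simpa only [hnorm] using norm_tsum_le_tsum_norm (hsumm'.congr fun n ↦ (hnorm n).symm)
    _ = ∑ n ∈ range N, D i n * ‖b n‖ + ∑' n, D i (n + N) * ‖b (n + N)‖ :=
        (hsumm'.sum_add_tsum_nat_add N).symm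
    _ < δ / 2 + δ / 2 := add_lt_add_of_lt_of_le hhead_lt (htail.trans hKη.le)
    _ = δ := add_halves δ

theorem Antitone.hasSum_sub_succ {w : ℕ → ℝ} (hw : Antitone w) (hw0 : Tendsto w atTop (𝓝 0)) :
    HasSum (fun n ↦ w n - w (n + 1)) (w 0) := by
  refine (hasSum_iff_tendsto_nat_of_nonneg (fun n ↦ sub_nonneg.2 (hw n.le_succ)) _).2 ?_
  simp_rw [sum_range_sub']
  simpa using tendsto_const_nhds.sub hw0

theorem Antitone.hasSum_sub_succ_smul_sum_range [CompleteSpace E] {w : ℕ → ℝ} (hw : Antitone w)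
    (hw0 : Tendsto w atTop (𝓝 0)) {a : ℕ → E} {S : E}
    (ha : Tendsto (fun N ↦ ∑ n ∈ range N, a n) atTop (𝓝 S)) (hwa : Summable fun n ↦ w n • a n) :
    HasSum (fun m ↦ (w m - w (m + 1)) • ∑ n ∈ range (m + 1), a n) (∑' n, w n • a n) := by
  obtain ⟨M, hM⟩ := ha.norm.bddAbove_range
  have hsumm : Summable fun m ↦ (w m - w (m + 1)) • ∑ n ∈ range (m + 1), a n := by
    refine Summable.of_norm_bounded ((hw.hasSum_sub_succ hw0).summable.mul_right M) fun m ↦ ?_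
    rw [norm_smul, Real.norm_of_nonneg (sub_nonneg.2 (hw m.le_succ))]
    exact mul_le_mul_of_nonneg_left (hM ⟨m + 1, rfl⟩) (sub_nonneg.2 (hw m.le_succ))
  refine hsumm.hasSum_iff_tendsto_nat.2 ?_
  have hparts : ∀ N, ∑ m ∈ range N, (w m - w (m + 1)) • ∑ n ∈ range (m + 1), a n
      = ∑ n ∈ range (N + 1), w n • a n - w N • ∑ n ∈ range (N + 1), a n := fun N ↦ by
    rw [sum_range_by_parts (f := w) (g := a) (n := N + 1), add_tsub_cancel_right]
    simp_rw [sub_sub_cancel_left, ← sum_neg_distrib, ← neg_smul, neg_sub]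
  simp_rw [hparts]
  simpa using ((hwa.hasSum.tendsto_sum_nat).comp (tendsto_add_atTop_nat 1)).sub
    (hw0.smul (ha.comp (tendsto_add_atTop_nat 1)))

theorem tendsto_tsum_smul_of_tendsto_sum_range [CompleteSpace E] {ι : Type*} {l : Filter ι}
    {a : ℕ → E} {S : E} (ha : Tendsto (fun N ↦ ∑ n ∈ range N, a n) atTop (𝓝 S))
    {w : ι → ℕ → ℝ} (hw_anti : ∀ᶠ i in l, Antitone (w i))
    (hw_zero : ∀ᶠ i in l, Tendsto (w i) atTop (𝓝 0))
    (hwa : ∀ᶠ i in l, Summable fun n ↦ w i n • a n)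
    (hw_one : ∀ n, Tendsto (fun i ↦ w i n) l (𝓝 1)) :
    Tendsto (fun i ↦ ∑' n, w i n • a n) l (𝓝 S) := by
  set D : ι → ℕ → ℝ := fun i m ↦ w i m - w i (m + 1)
  have hD : ∀ᶠ i in l, HasSum (D i) (w i 0) := by
    filter_upwards [hw_anti, hw_zero] with i hanti hzero using hanti.hasSum_sub_succ hzero
  -- Summation by parts writes the weighted sum as `∑' D i m • A (m + 1)` with `A` the
  -- partial sums of `a`, and `∑' D i m = w i 0`.
  have hsplit : ∀ᶠ i in l,
      ∑' n, w i n • a n = ∑' m, D i m • (∑ n ∈ range (m + 1), a n - S) + w i 0 • S := by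
    filter_upwards [hw_anti, hw_zero, hwa, hD] with i hanti hzero hsumm hDi
    have h := (hanti.hasSum_sub_succ_smul_sum_range hzero ha hsumm).sub (hDi.smul_const S)
    rw [← sub_eq_iff_eq_add, ← h.tsum_eq]
    simp_rw [smul_sub]
    rfl
  have herr : Tendsto (fun i ↦ ∑' m, D i m • (∑ n ∈ range (m + 1), a n - S)) l (𝓝 0) :=
    tendsto_tsum_smul_of_tendsto_zero
      (tendsto_sub_nhds_zero_iff.2 (ha.comp (tendsto_add_atTop_nat 1))) 2
      (by filter_upwards [hw_anti] with i hanti n using sub_nonneg.2 (hanti n.le_succ))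
      (by filter_upwards [hD] with i hDi using hDi.summable)
      (by filter_upwards [hD, (hw_one 0).eventually (ge_mem_nhds one_lt_two)] with i hDi h0
          using hDi.tsum_eq ▸ h0)
      (fun n ↦ by simpa using (hw_one n).sub (hw_one (n + 1)))
  simpa using (herr.add ((hw_one 0).smul_const S)).congr' (hsplit.mono fun i hi ↦ hi.symm)

theorem tendsto_tsum_rpow_neg_smul_nhdsGT_zero [CompleteSpace E] {a : ℕ → E} {S : E}
    (ha : Tendsto (fun N ↦ ∑ n ∈ range N, a n) atTop (𝓝 S))
    (hsumm : ∀ ε : ℝ, 0 < ε → Summable fun n : ℕ ↦ ((n + 1 : ℝ) ^ (-ε)) • a n) :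
    Tendsto (fun ε : ℝ ↦ ∑' n : ℕ, ((n + 1 : ℝ) ^ (-ε)) • a n) (𝓝[>] 0) (𝓝 S) := by
  refine tendsto_tsum_smul_of_tendsto_sum_range ha ?_ ?_ ?_ fun n ↦ ?_
  · filter_upwards [self_mem_nhdsWithin] with ε (hε : 0 < ε) m n hmn
    exact Real.rpow_le_rpow_of_nonpos (by positivity) (by gcongr) (by linarith)
  · filter_upwards [self_mem_nhdsWithin] with ε (hε : 0 < ε)
    exact (tendsto_rpow_neg_atTop hε).comp
      (tendsto_atTop_add_const_right _ 1 tendsto_natCast_atTop_atTop)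
  · filter_upwards [self_mem_nhdsWithin] with ε hε using hsumm ε hε
  · have hcont : ContinuousAt (fun ε : ℝ ↦ (n + 1 : ℝ) ^ (-ε)) 0 :=
      (Real.continuousAt_const_rpow (by positivity)).comp continuous_neg.continuousAt
    simpa using hcont.tendsto.mono_left nhdsWithin_le_nhds

end Abel

theorem Finset.sum_Icc_one_eq_sum_range {M : Type*} [AddCommMonoid M] (g : ℕ → M) (N : ℕ) :
    ∑ n ∈ Icc 1 N, g n = ∑ n ∈ range N, g (n + 1) := by
  rw [range_eq_Ico, sum_Ico_add', zero_add, Ico_add_one_right_eq_Icc]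

theorem Function.Periodic.sum_Icc_one_eq_sum_range {M : Type*} [AddCommMonoid M] {F : ℕ → M}
    {q : ℕ} (hF : Periodic F q) : ∑ a ∈ Icc 1 q, F a = ∑ a ∈ range q, F a := by
  rw [Finset.sum_Icc_one_eq_sum_range]
  rcases q with _ | p
  · rfl
  · rw [sum_range_succ, sum_range_succ' F, ← hF 0, zero_add]

theorem Function.Periodic.sum_mul_eq_sum_Icc_mul_sum_mod_eq {R : Type*} [Semiring R]
    {f : ℕ → R} {q : ℕ} (hf : Periodic f q) (hq : 0 < q) (s : Finset ℕ) (g : ℕ → R) :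
    ∑ n ∈ s, f n * g n = ∑ a ∈ Icc 1 q, f a * ∑ n ∈ s with n % q = a % q, g n := by
  have hF : Periodic (fun a ↦ f a * ∑ n ∈ s with n % q = a % q, g n) q := fun a ↦ by
    simp only [hf a, Nat.add_mod_right]
  rw [hF.sum_Icc_one_eq_sum_range,
    ← sum_fiberwise_of_maps_to (g := (· % q)) fun n _ ↦ mem_range.2 (Nat.mod_lt n hq)]
  refine sum_congr rfl fun a ha ↦ ?_
  rw [Nat.mod_eq_of_lt (mem_range.1 ha), mul_sum]
  refine sum_congr rfl fun n hn ↦ ?_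
  rw [← hf.map_mod_nat n, (mem_filter.1 hn).2]

theorem tendsto_sum_range_mul_log_pow_div {f : ℕ → ℂ} {q : ℕ} (hq : 0 < q) (hf : Periodic f q)
    (hsum : ∑ a ∈ Icc 1 q, f a = 0) (k : ℕ) {γ : ℕ → ℝ}
    (hγ : ∀ a ∈ Icc 1 q, Tendsto (fun x : ℝ ↦
      (∑ n ∈ Icc 1 ⌊x⌋₊ with n % q = a % q, Real.log n ^ k / n)
        - Real.log x ^ (k + 1) / (q * (k + 1))) atTop (𝓝 (γ a))) :
    Tendsto (fun N ↦ ∑ n ∈ range N, f (n + 1) * ((Real.log (n + 1) ^ k / (n + 1) : ℝ) : ℂ))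
      atTop (𝓝 (∑ a ∈ Icc 1 q, f a * γ a)) := by
  have hclass : ∀ a ∈ Icc 1 q, Tendsto (fun N : ℕ ↦ f a *
      (((∑ n ∈ Icc 1 N with n % q = a % q, Real.log n ^ k / n)
        - Real.log N ^ (k + 1) / (q * (k + 1)) : ℝ) : ℂ)) atTop (𝓝 (f a * γ a)) := by
    intro a ha
    have h := (hγ a ha).comp tendsto_natCast_atTop_atTop
    simp only [comp_def, Nat.floor_natCast] at h
    exact ((Complex.continuous_ofReal.tendsto _).comp h).const_mul (f a)
  -- Since `∑ f a = 0`, the main term common to all residue classes cancels.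
  refine (tendsto_finsetSum _ hclass).congr fun N ↦ ?_
  simp_rw [Complex.ofReal_sub, mul_sub, sum_sub_distrib, ← sum_mul, hsum, zero_mul, sub_zero,
    Complex.ofReal_sum]
  rw [← hf.sum_mul_eq_sum_Icc_mul_sum_mod_eq hq, Finset.sum_Icc_one_eq_sum_range]
  push_cast
  rfl

theorem LSeries.term_add_one (f : ℕ → ℂ) (s : ℂ) (n : ℕ) :
    term f s (n + 1) = f (n + 1) / ((n : ℂ) + 1) ^ s := by
  rw [term_of_ne_zero n.succ_ne_zero, Nat.cast_succ]

theorem LSeries_eq_tsum_add_one (f : ℕ → ℂ) (s : ℂ) :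
    LSeries f s = ∑' n : ℕ, f (n + 1) / ((n : ℂ) + 1) ^ s := by
  rw [LSeries, ← tsum_congr (LSeries.term_add_one f s)]
  by_cases h : Summable fun n ↦ LSeries.term f s (n + 1)
  · rw [tsum_eq_zero_add' h, LSeries.term_zero, zero_add]
  · rw [tsum_eq_zero_of_not_summable h,
      tsum_eq_zero_of_not_summable (mt (summable_nat_add_iff 1).2 h)]

theorem LSeries.iterate_logMul_apply (f : ℕ → ℂ) (k n : ℕ) :
    (logMul^[k] f) n = Complex.log n ^ k * f n := by
  induction k with
  | zero => simp
  | succ k ih => rw [iterate_succ_apply', logMul, ih, pow_succ, mul_assoc, mul_left_comm]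

theorem LSeries.hasSum_rpow_neg_smul_iterate_logMul {f : ℕ → ℂ} (hf : abscissaOfAbsConv f ≤ 1)
    (k : ℕ) {ε : ℝ} (hε : 0 < ε) :
    HasSum (fun n : ℕ ↦
        ((n + 1 : ℝ) ^ (-ε)) • (f (n + 1) * ((Real.log (n + 1) ^ k / (n + 1) : ℝ) : ℂ)))
      (LSeries (logMul^[k] f) (1 + ε)) := by
  have hs : LSeriesSummable (logMul^[k] f) (1 + ε) := by
    refine LSeriesSummable_of_abscissaOfAbsConv_lt_re ?_
    rw [absicssaOfAbsConv_logPowMul]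
    refine hf.trans_lt ?_
    simpa using (EReal.coe_lt_coe_iff.2 (lt_add_of_pos_right 1 hε))
  have h := (hasSum_nat_add_iff' 1).2 hs.LSeriesHasSum
  rw [sum_range_one, term_zero, sub_zero] at h
  refine h.congr_fun fun n ↦ ?_
  have hn : (0 : ℝ) < n + 1 := by positivity
  rw [term_add_one, iterate_logMul_apply, Complex.cpow_add _ _ (by exact_mod_cast hn.ne'),
    Complex.cpow_one, Real.rpow_neg hn.le, Complex.real_smul, Complex.ofReal_inv,
    Complex.ofReal_cpow hn.le, Complex.ofReal_div, Complex.ofReal_pow, Complex.ofReal_log hn.le]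
  push_cast
  field_simp

theorem LSeries.abscissaOfAbsConv_le_one_of_periodic {f : ℕ → ℂ} {q : ℕ} (hf : Periodic f q)
    (hq : 0 < q) : abscissaOfAbsConv f ≤ 1 :=
  abscissaOfAbsConv_le_of_le_const ⟨∑ a ∈ range q, ‖f a‖, fun n _ ↦
    hf.map_mod_nat n ▸ single_le_sum (fun a _ ↦ norm_nonneg (f a)) (mem_range.2 (Nat.mod_lt n hq))⟩

theorem iteratedDeriv_eq_LSeries_iterate_logMul {f : ℕ → ℂ}
    (hf : LSeries.abscissaOfAbsConv f ≤ 1) {L : ℂ → ℂ} (hL : ∀ s : ℂ, 1 < s.re → L s = LSeries f s)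
    (k : ℕ) {s : ℂ} (hs : 1 < s.re) :
    iteratedDeriv k L s = (-1) ^ k * LSeries (LSeries.logMul^[k] f) s := by
  have hev : L =ᶠ[𝓝 s] LSeries f :=
    eventually_of_mem ((isOpen_lt continuous_const Complex.continuous_re).mem_nhds hs) hL
  rw [hev.iteratedDeriv_eq, LSeries_iteratedDeriv k (hf.trans_lt (by exact_mod_cast hs))]

/-- If `f` is `q`-periodic with `∑_{a=1}^q f a = 0`, then the `k`-th derivative at `s = 1`
of the entire continuation `L(s,f)` of `∑ f(n) n^{-s}` equals
`(-1)^k ∑_{a=1}^q f a · γ_k(a,q)`, where `γ_k(a,q)` are the generalized Stieltjes constants. -/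
theorem iteratedDeriv_L_eq_stieltjes (q : ℕ) (hq : 0 < q) (f : ℕ → ℂ)
    (hper : ∀ n : ℕ, f (n + q) = f n)
    (hsum : ∑ a ∈ Finset.Icc 1 q, f a = 0)
    (L : ℂ → ℂ) (hLdiff : Differentiable ℂ L)
    (hLser : ∀ s : ℂ, 1 < s.re → L s = ∑' n : ℕ, f (n + 1) / ((n : ℂ) + 1) ^ s)
    (k : ℕ) (γ : ℕ → ℝ)
    (hγ : ∀ a ∈ Finset.Icc 1 q, Tendsto (fun x : ℝ =>
      (∑ n ∈ (Finset.Icc 1 ⌊x⌋₊).filter (fun n => n % q = a % q),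
        (Real.log n) ^ k / n) - (Real.log x) ^ (k + 1) / (q * (k + 1)))
      atTop (𝓝 (γ a))) :
    iteratedDeriv k L 1 = (-1) ^ k * ∑ a ∈ Finset.Icc 1 q, f a * (γ a : ℂ) := by
  have hf : Periodic f q := hper
  have habs := LSeries.abscissaOfAbsConv_le_one_of_periodic hf hq
  have hL : ∀ s : ℂ, 1 < s.re → L s = LSeries f s := fun s hs ↦
    (hLser s hs).trans (LSeries_eq_tsum_add_one f s).symm
  have hseries := fun ε (hε : 0 < ε) ↦ LSeries.hasSum_rpow_neg_smul_iterate_logMul habs k hε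
  have habel := tendsto_tsum_rpow_neg_smul_nhdsGT_zero
    (tendsto_sum_range_mul_log_pow_div hq hf hsum k hγ) fun ε hε ↦ (hseries ε hε).summable
  have hcont : Tendsto (fun ε : ℝ ↦ iteratedDeriv k L (1 + ε)) (𝓝[>] 0)
      (𝓝 (iteratedDeriv k L 1)) := by
    have hline : Tendsto (fun ε : ℝ ↦ 1 + (ε : ℂ)) (𝓝[>] 0) (𝓝 1) := by
      simpa using (tendsto_const_nhds.add (Complex.continuous_ofReal.tendsto 0)).mono_left
        nhdsWithin_le_nhds
    exact ((hLdiff.contDiff.continuous_iteratedDeriv k le_top).tendsto 1).comp hline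
  refine tendsto_nhds_unique hcont ((habel.const_mul ((-1) ^ k)).congr' ?_)
  filter_upwards [self_mem_nhdsWithin] with ε (hε : 0 < ε)
  rw [iteratedDeriv_eq_LSeries_iterate_logMul habs hL k (by simpa), (hseries ε hε).tsum_eq]
end
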